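/- Let 0 < μ < L, κ = μ/L, and suppose x₀, x₁, x*, g₀, g₁ ∈ ℝ^n, f₀, f₁, f* ∈ ℝ satisfy the five inequalities of the gradient-descent performance estimation proof (three F_{μ,L}-interpolation inequalities with g* = 0, plus -g₀ᵀg₁ ≥ 0 and g₁ᵀ(x₀-x₁) ≥ 0). Define s₁ = -((1+√κ)²/(1+κ))(x₀ - x* - g₀/√(Lμ)) + (x₁ - x* + g₁/√(Lμ)) and s₂ = ((1-√κ)²/(1+κ))(x₀ - x* + g₀/√(Lμ)) - (x₁ - x* - g₁/√(Lμ)). Then f₁ - f* ≤ ((1-κ)/(1+κ))²(f₀ - f*) - (μ/4)(‖s₁‖²/(1+√κ) + ‖s₂‖²/(1-√κ)). -/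

import Mathlib

open RealInnerProductSpace

/-- The `F_{μ,L}` interpolation inequality between the triples `(xi, fi, gi)` and
`(xj, fj, gj)`. -/
def InterpIneq {n : ℕ} (μ L : ℝ) (xi xj : EuclideanSpace ℝ (Fin n)) (fi fj : ℝ)
    (gi gj : EuclideanSpace ℝ (Fin n)) : Prop :=
  fi ≥ fj + ⟪gj, xi - xj⟫ + 1 / (2 * (1 - μ / L)) *
    ((1 / L) * ‖gi - gj‖ ^ 2 + μ * ‖xi - xj‖ ^ 2 - (2 * μ / L) * ⟪gj - gi, xj - xi⟫)

/-!
Writing `r = √κ`, so that `μ = L r²` and `√(Lμ) = L r`, the claimed bound is a nonnegative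
combination of the five hypotheses: the three interpolation slacks with multipliers
`(1 - κ)/(1 + κ)`, `2κ(1 - κ)/(1 + κ)²`, `2κ/(1 + κ)`, then `-⟪g₀, g₁⟫` with multiplier
`2/(L(1 + κ))` and `⟪g₁, x₀ - x₁⟫` with multiplier `1`. What remains after subtracting this
combination is exactly the sum of squares `(μ/4)(‖s₁‖²/(1 + r) + ‖s₂‖²/(1 - r))`, an identity in the
Gram matrix of `x₀, x₁, x⋆, g₀, g₁`.
-/

section
variable {E : Type*} [NormedAddCommGroup E] [InnerProductSpace ℝ E]

noncomputable def interpSlack (μ L : ℝ) (xi xj : E) (fi fj : ℝ) (gi gj : E) : ℝ :=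
  fi - (fj + ⟪gj, xi - xj⟫ + 1 / (2 * (1 - μ / L)) *
    ((1 / L) * ‖gi - gj‖ ^ 2 + μ * ‖xi - xj‖ ^ 2 - (2 * μ / L) * ⟪gj - gi, xj - xi⟫))

theorem interpSlack_certificate {L r : ℝ} (hL : L ≠ 0) (hr : 0 < r) (hr1 : r < 1)
    (x₀ x₁ xstar g₀ g₁ : E) (f₀ f₁ fstar : ℝ) :
    ((1 - r ^ 2) / (1 + r ^ 2)) ^ 2 * (f₀ - fstar)
      - L * r ^ 2 / 4 *
        (‖-(((1 + r) ^ 2 / (1 + r ^ 2)) • (x₀ - xstar - (L * r)⁻¹ • g₀)) +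
            (x₁ - xstar + (L * r)⁻¹ • g₁)‖ ^ 2 / (1 + r) +
          ‖((1 - r) ^ 2 / (1 + r ^ 2)) • (x₀ - xstar + (L * r)⁻¹ • g₀) -
            (x₁ - xstar - (L * r)⁻¹ • g₁)‖ ^ 2 / (1 - r))
      - (f₁ - fstar)
    = (1 - r ^ 2) / (1 + r ^ 2) * interpSlack (L * r ^ 2) L x₀ x₁ f₀ f₁ g₀ g₁
      + 2 * r ^ 2 * (1 - r ^ 2) / (1 + r ^ 2) ^ 2 * interpSlack (L * r ^ 2) L xstar x₀ fstar f₀ 0 g₀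
      + 2 * r ^ 2 / (1 + r ^ 2) * interpSlack (L * r ^ 2) L xstar x₁ fstar f₁ 0 g₁
      + 2 / (L * (1 + r ^ 2)) * -⟪g₀, g₁⟫
      + ⟪g₁, x₀ - x₁⟫ := by
  have h1r : 1 - r ≠ 0 := by linarith
  have h1r2 : 1 - r ^ 2 ≠ 0 := by nlinarith
  simp only [interpSlack, ← real_inner_self_eq_norm_sq, inner_sub_left, inner_sub_right,
    inner_add_left, inner_add_right, real_inner_smul_left, real_inner_smul_right, inner_neg_left,
    inner_neg_right, inner_zero_left, inner_zero_right]
  simp only [real_inner_comm x₁ x₀, real_inner_comm xstar x₀, real_inner_comm xstar x₁,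
    real_inner_comm g₀ x₀, real_inner_comm g₀ x₁, real_inner_comm g₀ xstar,
    real_inner_comm g₁ x₀, real_inner_comm g₁ x₁, real_inner_comm g₁ xstar,
    real_inner_comm g₁ g₀]
  field_simp
  ring

end

theorem InterpIneq.interpSlack_nonneg {n : ℕ} {μ L : ℝ} {xi xj gi gj : EuclideanSpace ℝ (Fin n)}
    {fi fj : ℝ} (h : InterpIneq μ L xi xj fi fj gi gj) :
    0 ≤ interpSlack μ L xi xj fi fj gi gj :=
  sub_nonneg.mpr h

theorem stmt14 {n : ℕ} (μ L : ℝ) (hμ : 0 < μ) (hμL : μ < L)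
    (x₀ x₁ xstar g₀ g₁ : EuclideanSpace ℝ (Fin n)) (f₀ f₁ fstar : ℝ)
    (h1 : InterpIneq μ L x₀ x₁ f₀ f₁ g₀ g₁)
    (h2 : InterpIneq μ L xstar x₀ fstar f₀ 0 g₀)
    (h3 : InterpIneq μ L xstar x₁ fstar f₁ 0 g₁)
    (h4 : -⟪g₀, g₁⟫ ≥ 0)
    (h5 : ⟪g₁, x₀ - x₁⟫ ≥ 0)
    (κ : ℝ) (hκ : κ = μ / L)
    (s₁ s₂ : EuclideanSpace ℝ (Fin n))
    (hs₁ : s₁ = -(((1 + Real.sqrt κ) ^ 2 / (1 + κ)) •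
        (x₀ - xstar - (Real.sqrt (L * μ))⁻¹ • g₀)) +
      (x₁ - xstar + (Real.sqrt (L * μ))⁻¹ • g₁))
    (hs₂ : s₂ = ((1 - Real.sqrt κ) ^ 2 / (1 + κ)) •
        (x₀ - xstar + (Real.sqrt (L * μ))⁻¹ • g₀) -
      (x₁ - xstar - (Real.sqrt (L * μ))⁻¹ • g₁)) :
    f₁ - fstar ≤ ((1 - κ) / (1 + κ)) ^ 2 * (f₀ - fstar) -
      μ / 4 * (‖s₁‖ ^ 2 / (1 + Real.sqrt κ) + ‖s₂‖ ^ 2 / (1 - Real.sqrt κ)) := by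
  have hL : 0 < L := hμ.trans hμL
  set r := Real.sqrt κ
  have hκr : κ = r ^ 2 := (Real.sq_sqrt (by rw [hκ]; positivity)).symm
  have hμr : μ = L * r ^ 2 := by rw [← hκr, hκ]; field_simp
  have hr : 0 < r := Real.sqrt_pos.2 (by rw [hκ]; positivity)
  have hr1 : r < 1 :=
    (Real.sqrt_lt' one_pos).2 (by rw [hκ, one_pow]; exact (div_lt_one hL).2 hμL)
  have hsqrt : Real.sqrt (L * μ) = L * r := by
    rw [hμr, show L * (L * r ^ 2) = (L * r) ^ 2 by ring]
    exact Real.sqrt_sq (by positivity)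
  rw [hsqrt, hκr] at hs₁ hs₂
  subst hs₁ hs₂ hμr
  rw [hκr, ← sub_nonneg, interpSlack_certificate hL.ne' hr hr1]
  have hw₁ : 0 ≤ (1 - r ^ 2) / (1 + r ^ 2) := div_nonneg (by nlinarith) (by positivity)
  have hw₂ : 0 ≤ 2 * r ^ 2 * (1 - r ^ 2) / (1 + r ^ 2) ^ 2 :=
    div_nonneg (by nlinarith) (by positivity)
  have hw₃ : 0 ≤ 2 * r ^ 2 / (1 + r ^ 2) := by positivity
  have hw₄ : 0 ≤ 2 / (L * (1 + r ^ 2)) := by positivity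
  linarith [mul_nonneg hw₁ h1.interpSlack_nonneg, mul_nonneg hw₂ h2.interpSlack_nonneg,
    mul_nonneg hw₃ h3.interpSlack_nonneg, mul_nonneg hw₄ h4]
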